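/- Let X be a compact subset of ℝ^N equipped with a finite positive Borel measure μ, and let (T_n) be a sequence of sublinear and monotone operators from C(X), the continuous real-valued functions on X, into itself. Assume that for each of the test functions h ∈ {1, pr_1, …, pr_N, −pr_1, …, −pr_N, Σ_{k=1}^N pr_k²} (restricted to X) and every ε > 0 one has μ({x ∈ X : |T_n(h)(x) − h(x)| ≥ ε}) → 0 as n → ∞. Then for every nonnegative f ∈ C(X) and every ε > 0, μ({x ∈ X : |T_n(f)(x) − f(x)| ≥ ε}) → 0 as n → ∞. -/

import Mathlib

/-!
Fix `x ∈ X`. By uniform continuity, `|f y - f x| ≤ ε + C |y - x|²` for all `y`, and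
`y ↦ |y - x|²` is a combination of the test functions whose coefficients are bounded uniformly
in `x`. Sandwiching `f` between `f x ± (ε + C |· - x|²)` and using monotonicity and sublinearity
(this is where `f x ≥ 0` is needed) gives `|Tₙ f x - f x| ≤ ε + A η` whenever `|Tₙ h x - h x| < η`
for every test function `h`, with `A` independent of `n` and `x`. The set where `Tₙ f` is far from
`f` is therefore covered by finitely many sets where some `Tₙ h` is far from `h`.
-/

open MeasureTheory Filter Topology Set

namespace MeasureTheory

theorem tendstoInMeasure_of_forall_dist_lt {α ι κ E : Type*} [MeasurableSpace α]
    {μ : Measure α} [PseudoMetricSpace E] {l : Filter κ} {s : Set ι} (hs : s.Finite)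
    {u : ι → κ → α → E} {g : ι → α → E} {v : κ → α → E} {w : α → E}
    (hu : ∀ i ∈ s, TendstoInMeasure μ (u i) l (g i))
    (hv : ∀ ε > 0, ∃ η > 0, ∀ n x,
      (∀ i ∈ s, dist (u i n x) (g i x) < η) → dist (v n x) (w x) < ε) :
    TendstoInMeasure μ v l w := by
  simp only [tendstoInMeasure_iff_dist] at hu ⊢
  intro ε hε
  obtain ⟨η, hη, hv⟩ := hv ε hε
  have hsub : ∀ n, {x | ε ≤ dist (v n x) (w x)} ⊆
      ⋃ i ∈ hs.toFinset, {x | η ≤ dist (u i n x) (g i x)} := by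
    intro n x hx
    contrapose! hx
    simpa using hv n x (by simpa using hx)
  refine tendsto_of_tendsto_of_tendsto_of_le_of_le tendsto_const_nhds ?_ (fun _ ↦ zero_le)
    fun n ↦ (measure_mono (hsub n)).trans (measure_biUnion_finset_le _ _)
  simpa using tendsto_finsetSum hs.toFinset fun i hi ↦ hu i (hs.mem_toFinset.mp hi) η hη

end MeasureTheory

theorem ContinuousMap.exists_abs_sub_le_add_mul_dist_sq {X : Type*} [PseudoMetricSpace X]
    [CompactSpace X] (f : C(X, ℝ)) {ε : ℝ} (hε : 0 < ε) :
    ∃ C, 0 ≤ C ∧ ∀ x y, |f y - f x| ≤ ε + C * dist y x ^ 2 := by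
  obtain ⟨δ, hδ, hf⟩ := Metric.uniformContinuous_iff.mp
    (CompactSpace.uniformContinuous_of_continuous f.continuous) ε hε
  have hC : 0 ≤ 2 * ‖f‖ / δ ^ 2 := by positivity
  refine ⟨_, hC, fun x y ↦ ?_⟩
  rcases lt_or_ge (dist y x) δ with hxy | hxy
  · have := (hf hxy).le
    rw [Real.dist_eq] at this
    linarith [mul_nonneg hC (sq_nonneg (dist y x))]
  · calc |f y - f x| ≤ ‖f y‖ + ‖f x‖ := abs_sub _ _
      _ ≤ ‖f‖ + ‖f‖ := add_le_add (f.norm_coe_le_norm y) (f.norm_coe_le_norm x)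
      _ = 2 * ‖f‖ / δ ^ 2 * δ ^ 2 := by field_simp; ring
      _ ≤ ε + 2 * ‖f‖ / δ ^ 2 * dist y x ^ 2 := by
        nlinarith [mul_le_mul_of_nonneg_left (pow_le_pow_left₀ hδ.le hxy 2) hC]

theorem dist_sq_le_sum_sq {ι : Type*} [Fintype ι] (x y : ι → ℝ) :
    dist x y ^ 2 ≤ ∑ i, (x i - y i) ^ 2 := by
  have hsqrt : dist x y ≤ √(∑ i, (x i - y i) ^ 2) := by
    refine (dist_pi_le_iff (Real.sqrt_nonneg _)).mpr fun i ↦ ?_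
    rw [Real.dist_eq]
    exact Real.abs_le_sqrt (Finset.single_le_sum (fun j _ ↦ sq_nonneg (x j - y j))
      (Finset.mem_univ i))
  calc dist x y ^ 2 ≤ √(∑ i, (x i - y i) ^ 2) ^ 2 := by gcongr
    _ = ∑ i, (x i - y i) ^ 2 := Real.sq_sqrt (Finset.sum_nonneg fun i _ ↦ sq_nonneg _)

structure IsSublinear {E F : Type*} [Add E] [SMul ℝ E] [Add F] [SMul ℝ F] [LE F]
    (T : E → F) : Prop where
  map_add_le : ∀ f g, T (f + g) ≤ T f + T g
  map_smul_of_nonneg : ∀ α : ℝ, 0 ≤ α → ∀ f, T (α • f) = α • T f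

namespace IsSublinear

variable {X : Type*} [TopologicalSpace X] {T : C(X, ℝ) → C(X, ℝ)} (hT : IsSublinear T)
include hT

theorem map_zero : T 0 = 0 := by
  simpa using hT.map_smul_of_nonneg 0 le_rfl 0

theorem apply_add_sub_le (f g : C(X, ℝ)) (x : X) :
    T (f + g) x - (f + g) x ≤ (T f x - f x) + (T g x - g x) := by
  have := ContinuousMap.le_def.mp (hT.map_add_le f g) x
  simp only [ContinuousMap.add_apply] at this ⊢
  linarith

theorem apply_sum_sub_le {ι : Type*} (s : Finset ι) (h : ι → C(X, ℝ)) (x : X) :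
    T (∑ i ∈ s, h i) x - (∑ i ∈ s, h i) x ≤ ∑ i ∈ s, (T (h i) x - h i x) := by
  classical
  induction s using Finset.induction_on with
  | empty => simp [hT.map_zero]
  | insert i s hi ih =>
    rw [Finset.sum_insert hi, Finset.sum_insert hi]
    exact (hT.apply_add_sub_le _ _ x).trans (by linarith)

theorem apply_smul_sub_le_of_nonneg {c : ℝ} (hc : 0 ≤ c) (h : C(X, ℝ)) (x : X) :
    T (c • h) x - (c • h) x ≤ c * |T h x - h x| := by
  rw [hT.map_smul_of_nonneg c hc, ContinuousMap.smul_apply, ContinuousMap.smul_apply,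
    smul_eq_mul, smul_eq_mul, ← mul_sub]
  exact mul_le_mul_of_nonneg_left (le_abs_self _) hc

/-- A negative coefficient is absorbed into `-h`; this is why `-pr_k` is a test function. -/
theorem apply_smul_sub_le (c : ℝ) (h : C(X, ℝ)) (x : X) :
    T (c • h) x - (c • h) x ≤ |c| * (|T h x - h x| + |T (-h) x - (-h) x|) := by
  rcases le_total 0 c with hc | hc
  · have := hT.apply_smul_sub_le_of_nonneg hc h x
    rw [abs_of_nonneg hc]
    nlinarith [abs_nonneg (T (-h) x - (-h) x)]
  · have := hT.apply_smul_sub_le_of_nonneg (neg_nonneg.mpr hc) (-h) x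
    rw [neg_smul_neg] at this
    rw [abs_of_nonpos hc]
    nlinarith [abs_nonneg (T h x - h x)]

theorem abs_apply_sub_le (hmono : Monotone T) {f g : C(X, ℝ)} {x : X} (hfx : 0 ≤ f x)
    (hg : ∀ y, |f y - f x| ≤ g y) :
    |T f x - f x| ≤ f x * |T 1 x - 1| + T g x := by
  have hT1 := hT.map_smul_of_nonneg (f x) hfx 1
  have hup : T f x ≤ f x * T 1 x + T g x := by
    have hle : f ≤ f x • 1 + g := ContinuousMap.le_def.mpr fun y ↦ by
      simp only [ContinuousMap.add_apply, ContinuousMap.smul_apply, ContinuousMap.one_apply,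
        smul_eq_mul, mul_one]
      linarith [le_abs_self (f y - f x), hg y]
    simpa [hT1] using (hmono hle).trans (hT.map_add_le _ _) x
  have hlo : f x * T 1 x ≤ T f x + T g x := by
    have hle : f x • 1 ≤ f + g := ContinuousMap.le_def.mpr fun y ↦ by
      simp only [ContinuousMap.add_apply, ContinuousMap.smul_apply, ContinuousMap.one_apply,
        smul_eq_mul, mul_one]
      linarith [neg_abs_le (f y - f x), hg y]
    simpa [hT1] using (hmono hle).trans (hT.map_add_le _ _) x
  rw [abs_le]
  constructor <;> nlinarith [le_abs_self (T 1 x - 1), neg_abs_le (T 1 x - 1)]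

end IsSublinear

namespace Korovkin

variable {N : ℕ} (X : Set (Fin N → ℝ))

def coordProj (k : Fin N) : C(X, ℝ) :=
  ⟨fun x ↦ (x : Fin N → ℝ) k, (continuous_apply k).comp continuous_subtype_val⟩

def sqNorm : C(X, ℝ) :=
  ⟨fun x ↦ ∑ k, (x : Fin N → ℝ) k ^ 2,
    continuous_finsetSum _ fun k _ ↦ (coordProj X k).continuous.pow 2⟩

def sqDistFrom (x : X) : C(X, ℝ) :=
  ⟨fun y ↦ ∑ k, ((y : Fin N → ℝ) k - (x : Fin N → ℝ) k) ^ 2,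
    continuous_finsetSum _ fun k _ ↦ ((coordProj X k).continuous.sub continuous_const).pow 2⟩

def testFunctions : Set C(X, ℝ) :=
  {1, sqNorm X} ∪ range (coordProj X) ∪ range (-coordProj X)

theorem testFunctions_finite : (testFunctions X).Finite :=
  ((toFinite _).union (finite_range _)).union (finite_range _)

theorem sqDistFrom_eq (x : X) :
    sqDistFrom X x =
      sqNorm X x • 1 + sqNorm X + ∑ k, (-2 * (x : Fin N → ℝ) k) • coordProj X k := by
  ext y
  simp only [sqDistFrom, sqNorm, coordProj, ContinuousMap.add_apply, ContinuousMap.smul_apply,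
    ContinuousMap.one_apply, ContinuousMap.sum_apply, ContinuousMap.coe_mk, smul_eq_mul, mul_one,
    ← Finset.sum_add_distrib]
  exact Finset.sum_congr rfl fun k _ ↦ by ring

variable {X} {T : C(X, ℝ) → C(X, ℝ)}

theorem _root_.IsSublinear.apply_sqDistFrom_self_le (hT : IsSublinear T) {x : X} {η : ℝ}
    (hη : ∀ h ∈ testFunctions X, |T h x - h x| < η) :
    T (sqDistFrom X x) x ≤ (sqNorm X x + 1 + 4 * ∑ k, |(x : Fin N → ℝ) k|) * η := by
  have h1 := hη 1 (by simp [testFunctions])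
  have hq := hη (sqNorm X) (by simp [testFunctions])
  have hp : ∀ k, |T (coordProj X k) x - coordProj X k x| < η := fun k ↦
    hη _ (by simp [testFunctions])
  have hnp : ∀ k, |T (-coordProj X k) x - (-coordProj X k) x| < η := fun k ↦
    hη _ (by simp [testFunctions])
  have hself : sqDistFrom X x x = 0 := by simp [sqDistFrom]
  have hqx : 0 ≤ sqNorm X x := by simp only [sqNorm, ContinuousMap.coe_mk]; positivity
  have hsum : ∑ k, (T ((-2 * (x : Fin N → ℝ) k) • coordProj X k) x -
      ((-2 * (x : Fin N → ℝ) k) • coordProj X k) x) ≤ ∑ k, 4 * |(x : Fin N → ℝ) k| * η := by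
    refine Finset.sum_le_sum fun k _ ↦ (hT.apply_smul_sub_le _ _ x).trans ?_
    rw [abs_mul, abs_neg, abs_two]
    nlinarith [hp k, hnp k, abs_nonneg ((x : Fin N → ℝ) k)]
  calc T (sqDistFrom X x) x = T (sqDistFrom X x) x - sqDistFrom X x x := by rw [hself, sub_zero]
    _ ≤ (T (sqNorm X x • 1) x - (sqNorm X x • 1 : C(X, ℝ)) x) + (T (sqNorm X) x - sqNorm X x) +
        ∑ k, (T ((-2 * (x : Fin N → ℝ) k) • coordProj X k) x -
          ((-2 * (x : Fin N → ℝ) k) • coordProj X k) x) := by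
      rw [sqDistFrom_eq]
      refine (hT.apply_add_sub_le _ _ x).trans ?_
      gcongr
      · exact hT.apply_add_sub_le _ _ x
      · exact hT.apply_sum_sub_le _ _ x
    _ ≤ sqNorm X x * η + η + ∑ k, 4 * |(x : Fin N → ℝ) k| * η := by
      gcongr
      · exact (hT.apply_smul_sub_le_of_nonneg hqx 1 x).trans (by gcongr)
      · exact (le_abs_self _).trans hq.le
    _ = (sqNorm X x + 1 + 4 * ∑ k, |(x : Fin N → ℝ) k|) * η := by
      rw [← Finset.sum_mul, ← Finset.mul_sum]; ring

theorem exists_pos_abs_apply_sub_lt [CompactSpace X] {f : C(X, ℝ)} (hf : 0 ≤ f) {ε : ℝ}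
    (hε : 0 < ε) :
    ∃ η > 0, ∀ T : C(X, ℝ) → C(X, ℝ), IsSublinear T → Monotone T → ∀ x,
      (∀ h ∈ testFunctions X, |T h x - h x| < η) → |T f x - f x| < ε := by
  obtain ⟨C, hC, hfC⟩ := f.exists_abs_sub_le_add_mul_dist_sq (half_pos hε)
  have hK : ∀ x : X, sqNorm X x + 1 + 4 * ∑ k, |(x : Fin N → ℝ) k| ≤
      ‖sqNorm X‖ + 1 + 4 * ∑ k, ‖coordProj X k‖ := fun x ↦ by
    gcongr with k
    · exact (le_abs_self _).trans ((sqNorm X).norm_coe_le_norm x)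
    · exact (coordProj X k).norm_coe_le_norm x
  set K := ‖sqNorm X‖ + 1 + 4 * ∑ k, ‖coordProj X k‖
  set A := ‖f‖ + ε / 2 + C * K
  have hA : 0 ≤ A := by positivity
  refine ⟨ε / 2 / (A + 1), by positivity, fun T hT hmono x hη ↦ ?_⟩
  set η := ε / 2 / (A + 1)
  have hη₀ : 0 < η := by positivity
  have hAη : A * η < ε / 2 := by
    calc A * η = ε / 2 * (A / (A + 1)) := by simp only [η]; ring
      _ < ε / 2 * 1 := by gcongr; exact (div_lt_one (by positivity)).mpr (lt_add_one A)
      _ = ε / 2 := mul_one _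
  have h1 : |T 1 x - 1| < η := hη 1 (by simp [testFunctions])
  have hg : ∀ y, |f y - f x| ≤ ((ε / 2) • 1 + C • sqDistFrom X x) y := fun y ↦ by
    simp only [ContinuousMap.add_apply, ContinuousMap.smul_apply, ContinuousMap.one_apply,
      smul_eq_mul, mul_one]
    exact (hfC x y).trans (by gcongr; exact dist_sq_le_sum_sq (y : Fin N → ℝ) x)
  have hTg : T ((ε / 2) • 1 + C • sqDistFrom X x) x ≤
      ε / 2 * T 1 x + C * T (sqDistFrom X x) x := by
    have := ContinuousMap.le_def.mp (hT.map_add_le ((ε / 2) • 1) (C • sqDistFrom X x)) x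
    rwa [hT.map_smul_of_nonneg _ (half_pos hε).le, hT.map_smul_of_nonneg _ hC] at this
  calc |T f x - f x| ≤ f x * |T 1 x - 1| + T ((ε / 2) • 1 + C • sqDistFrom X x) x :=
        hT.abs_apply_sub_le hmono (hf x) hg
    _ ≤ ‖f‖ * η + (ε / 2 * (1 + η) + C * (K * η)) := by
      have hfx : f x ≤ ‖f‖ := (le_abs_self _).trans (f.norm_coe_le_norm x)
      have hT1 : T 1 x ≤ 1 + η := by linarith [(abs_lt.mp h1).2]
      have hTq := (hT.apply_sqDistFrom_self_le hη).trans
        (mul_le_mul_of_nonneg_right (hK x) hη₀.le)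
      refine add_le_add (mul_le_mul hfx h1.le (abs_nonneg _) (norm_nonneg f)) (hTg.trans ?_)
      gcongr
    _ = ε / 2 + A * η := by ring
    _ < ε := by linarith

end Korovkin

theorem korovkin_inMeasure_nonneg_general {N : ℕ} (X : Set (Fin N → ℝ)) [CompactSpace X]
    (μ : Measure X)
    (T : ℕ → C(X, ℝ) → C(X, ℝ))
    (hsubadd : ∀ n, ∀ f g : C(X, ℝ), T n (f + g) ≤ T n f + T n g)
    (hhom : ∀ n, ∀ (α : ℝ), 0 ≤ α → ∀ f : C(X, ℝ), T n (α • f) = α • T n f)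
    (hmono : ∀ n, ∀ f g : C(X, ℝ), f ≤ g → T n f ≤ T n g)
    -- convergence in measure for each test function
    (htest : ∀ h : C(X, ℝ),
      ((⇑h = fun _ => (1 : ℝ)) ∨
        (∃ k : Fin N, ⇑h = fun x : X => (x : Fin N → ℝ) k) ∨
        (∃ k : Fin N, ⇑h = fun x : X => -((x : Fin N → ℝ) k)) ∨
        (⇑h = fun x : X => ∑ k, ((x : Fin N → ℝ) k) ^ 2)) →
      ∀ ε : ℝ, 0 < ε →
        Tendsto (fun n => μ {x | ε ≤ |T n h x - h x|}) atTop (𝓝 0))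
    (f : C(X, ℝ)) (hf : 0 ≤ f) :
    ∀ ε : ℝ, 0 < ε →
      Tendsto (fun n => μ {x | ε ≤ |T n f x - f x|}) atTop (𝓝 0) := by
  have htendsto : ∀ h ∈ Korovkin.testFunctions X,
      TendstoInMeasure μ (fun n ↦ ⇑(T n h)) atTop h := by
    rintro h (((rfl | rfl) | ⟨k, rfl⟩) | ⟨k, rfl⟩) <;>
      refine tendstoInMeasure_iff_dist.mpr (htest _ ?_)
    · exact Or.inl rfl
    · exact Or.inr (Or.inr (Or.inr rfl))
    · exact Or.inr (Or.inl ⟨k, rfl⟩)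
    · exact Or.inr (Or.inr (Or.inl ⟨k, rfl⟩))
  refine tendstoInMeasure_iff_dist.mp <|
    tendstoInMeasure_of_forall_dist_lt (Korovkin.testFunctions_finite X) htendsto fun ε hε ↦ ?_
  obtain ⟨η, hη, hclose⟩ := Korovkin.exists_pos_abs_apply_sub_lt hf hε
  exact ⟨η, hη, fun n x ↦ hclose (T n) ⟨hsubadd n, hhom n⟩ (fun f g ↦ hmono n f g) x⟩

/-- **Theorem `thm-measure`, first part.** Korovkin-type theorem for
convergence in measure: sublinear and monotone operators on `C(X)`, `X` a compact
subset of `ℝ^N` with a finite Borel measure `μ`, test functions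
`1, ±pr_1, …, ±pr_N, Σ pr_k²`; conclusion for nonnegative `f ∈ C(X)`. -/
theorem korovkin_inMeasure_nonneg {N : ℕ} (X : Set (Fin N → ℝ)) [CompactSpace X]
    (μ : Measure X) [IsFiniteMeasure μ]
    (T : ℕ → C(X, ℝ) → C(X, ℝ))
    (hsubadd : ∀ n, ∀ f g : C(X, ℝ), T n (f + g) ≤ T n f + T n g)
    (hhom : ∀ n, ∀ (α : ℝ), 0 ≤ α → ∀ f : C(X, ℝ), T n (α • f) = α • T n f)
    (hmono : ∀ n, ∀ f g : C(X, ℝ), f ≤ g → T n f ≤ T n g)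
    -- convergence in measure for each test function
    (htest : ∀ h : C(X, ℝ),
      ((⇑h = fun _ => (1 : ℝ)) ∨
        (∃ k : Fin N, ⇑h = fun x : X => (x : Fin N → ℝ) k) ∨
        (∃ k : Fin N, ⇑h = fun x : X => -((x : Fin N → ℝ) k)) ∨
        (⇑h = fun x : X => ∑ k, ((x : Fin N → ℝ) k) ^ 2)) →
      ∀ ε : ℝ, 0 < ε →
        Tendsto (fun n => μ {x | ε ≤ |T n h x - h x|}) atTop (𝓝 0))
    (f : C(X, ℝ)) (hf : 0 ≤ f) :
    ∀ ε : ℝ, 0 < ε →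
      Tendsto (fun n => μ {x | ε ≤ |T n f x - f x|}) atTop (𝓝 0) :=
  korovkin_inMeasure_nonneg_general X μ T hsubadd hhom hmono htest f hf
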